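/- arXiv:2008.08067 — 4 statements merged into one kernel-verified Lean document; each statement's English description precedes it below -/
import Mathlib

section
/- Let γ : I → ℂ be a twice-differentiable unit-speed curve with γ(s) ≠ 0 for all s, and let F(s,φ) = (γ(s)·cos φ, γ(s)·sin φ). Then for all s,φ: ∂²F/∂s² + (⟨γ(s),γ'(s)⟩/|γ(s)|²)·∂F/∂s + (1/|γ(s)|²)·∂²F/∂φ² = (h(s)·cos φ, h(s)·sin φ), where h(s) = κ(s) − γ⊥(s)/|γ(s)|². (The left-hand side is the Laplace–Beltrami operator of the induced metric applied to F, i.e., the mean curvature vector of the equivariant Lagrangian; hence Lagrangian mean curvature flow of equivariant Lagrangians reduces to the curve flow ∂γ/∂t = κ − γ⊥/|γ|².) -/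
/-! Both second partial derivatives of `F` have closed forms: `∂²F/∂s² = (γ'' cos φ, γ'' sin φ)`
and `∂²F/∂φ² = -F`. The identity is then a polynomial identity in `γ''`, `γ'`, `γ` and `|γ|⁻²`. -/

variable {𝕜 : Type*} [NontriviallyNormedField 𝕜]

theorem deriv_deriv_eq_of_hasDerivAt {F : Type*} [NormedAddCommGroup F] [NormedSpace 𝕜 F]
    {f f' : 𝕜 → F} {f'' : F} {U : Set 𝕜} {x : 𝕜} (hU : IsOpen U)
    (hf : ∀ t ∈ U, HasDerivAt f (f' t) t) (hx : x ∈ U) (hf' : HasDerivAt f' f'' x) :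
    deriv (deriv f) x = f'' :=
  (Filter.eventuallyEq_of_mem (hU.mem_nhds hx) fun t ht => (hf t ht).deriv).deriv_eq.trans
    hf'.deriv

theorem HasDerivAt.mul_const_prodMk {𝔸 : Type*} [NormedRing 𝔸] [NormedAlgebra 𝕜 𝔸]
    {f : 𝕜 → 𝔸} {f' : 𝔸} {x : 𝕜} (hf : HasDerivAt f f' x) (a b : 𝔸) :
    HasDerivAt (fun t => (f t * a, f t * b)) (f' * a, f' * b) x :=
  (hf.mul_const a).prodMk (hf.mul_const b)

theorem hasDerivAt_mul_cos_mul_sin (z : ℂ) (ψ : ℝ) :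
    HasDerivAt (fun χ : ℝ => (z * (Real.cos χ : ℂ), z * (Real.sin χ : ℂ)))
      (-(z * (Real.sin ψ : ℂ)), z * (Real.cos ψ : ℂ)) ψ := by
  simpa using ((Real.hasDerivAt_cos ψ).ofReal_comp.const_mul z).prodMk
    ((Real.hasDerivAt_sin ψ).ofReal_comp.const_mul z)

theorem deriv_deriv_mul_cos_mul_sin (z : ℂ) (φ : ℝ) :
    deriv (deriv fun χ : ℝ => (z * (Real.cos χ : ℂ), z * (Real.sin χ : ℂ))) φ
      = -(z * (Real.cos φ : ℂ), z * (Real.sin φ : ℂ)) := by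
  refine deriv_deriv_eq_of_hasDerivAt isOpen_univ
    (fun ψ _ => hasDerivAt_mul_cos_mul_sin z ψ) (Set.mem_univ φ) ?_
  simpa using ((Real.hasDerivAt_sin φ).ofReal_comp.const_mul z).neg.prodMk
    ((Real.hasDerivAt_cos φ).ofReal_comp.const_mul z)

theorem equivariant_mean_curvature_general (I : Set ℝ) (hI : IsOpen I) (γ γ' γ'' : ℝ → ℂ)
    (hd1 : ∀ s ∈ I, HasDerivAt γ (γ' s) s)
    (hd2 : ∀ s ∈ I, HasDerivAt γ' (γ'' s) s) :
    ∀ s ∈ I, ∀ φ : ℝ,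
      deriv (fun σ : ℝ =>
          deriv (fun τ : ℝ => (γ τ * (Real.cos φ : ℂ), γ τ * (Real.sin φ : ℂ))) σ) s
      + ((γ s * star (γ' s)).re / Complex.normSq (γ s)) •
          deriv (fun σ : ℝ => (γ σ * (Real.cos φ : ℂ), γ σ * (Real.sin φ : ℂ))) s
      + (Complex.normSq (γ s))⁻¹ •
          deriv (fun ψ : ℝ =>
            deriv (fun χ : ℝ => (γ s * (Real.cos χ : ℂ), γ s * (Real.sin χ : ℂ))) ψ) φ
      = ((γ'' s - (γ s - ((γ s * star (γ' s)).re : ℝ) • γ' s) / (Complex.normSq (γ s) : ℂ))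
            * (Real.cos φ : ℂ),
         (γ'' s - (γ s - ((γ s * star (γ' s)).re : ℝ) • γ' s) / (Complex.normSq (γ s) : ℂ))
            * (Real.sin φ : ℂ)) := by
  intro s hs φ
  rw [deriv_deriv_eq_of_hasDerivAt hI (fun t ht => (hd1 t ht).mul_const_prodMk _ _) hs
      ((hd2 s hs).mul_const_prodMk _ _), ((hd1 s hs).mul_const_prodMk _ _).deriv,
    deriv_deriv_mul_cos_mul_sin]
  ext <;>
    simp only [Prod.fst_add, Prod.snd_add, Prod.smul_fst, Prod.smul_snd, Prod.fst_neg,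
      Prod.snd_neg, Complex.real_smul, Complex.ofReal_div, Complex.ofReal_inv] <;>
    ring

/-- For a twice-differentiable unit-speed curve `γ : I → ℂ` with `γ(s) ≠ 0`, and the
equivariant surface `F(s,φ) = (γ(s)·cos φ, γ(s)·sin φ)`, the Laplace–Beltrami operator of the
induced metric applied to `F`, namely
`∂²F/∂s² + (⟨γ,γ'⟩/|γ|²)·∂F/∂s + (1/|γ|²)·∂²F/∂φ²`,
equals `(h(s)·cos φ, h(s)·sin φ)` where `h = κ − γ⊥/|γ|²`, `κ = γ''` and
`γ⊥ = γ − ⟨γ,γ'⟩·γ'` with `⟨a,b⟩ = Re(a·conj b)`.  This is the mean curvature vector of the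
equivariant Lagrangian, so Lagrangian mean curvature flow reduces to `∂γ/∂t = κ − γ⊥/|γ|²`. -/
theorem equivariant_mean_curvature (I : Set ℝ) (hI : IsOpen I) (γ γ' γ'' : ℝ → ℂ)
    (hd1 : ∀ s ∈ I, HasDerivAt γ (γ' s) s)
    (hd2 : ∀ s ∈ I, HasDerivAt γ' (γ'' s) s)
    (hunit : ∀ s ∈ I, ‖γ' s‖ = 1)
    (hne : ∀ s ∈ I, γ s ≠ 0) :
    ∀ s ∈ I, ∀ φ : ℝ,
      deriv (fun σ : ℝ =>
          deriv (fun τ : ℝ => (γ τ * (Real.cos φ : ℂ), γ τ * (Real.sin φ : ℂ))) σ) s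
      + ((γ s * star (γ' s)).re / Complex.normSq (γ s)) •
          deriv (fun σ : ℝ => (γ σ * (Real.cos φ : ℂ), γ σ * (Real.sin φ : ℂ))) s
      + (Complex.normSq (γ s))⁻¹ •
          deriv (fun ψ : ℝ =>
            deriv (fun χ : ℝ => (γ s * (Real.cos χ : ℂ), γ s * (Real.sin χ : ℂ))) ψ) φ
      = ((γ'' s - (γ s - ((γ s * star (γ' s)).re : ℝ) • γ' s) / (Complex.normSq (γ s) : ℂ))
            * (Real.cos φ : ℂ),
         (γ'' s - (γ s - ((γ s * star (γ' s)).re : ℝ) • γ' s) / (Complex.normSq (γ s) : ℂ))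
            * (Real.sin φ : ℂ)) :=
  equivariant_mean_curvature_general I hI γ γ' γ'' hd1 hd2
end

section
/- Let γ₀ : I → ℂ∖{0} be a regular twice-differentiable curve satisfying the soliton equation κ₀ − γ₀⊥/|γ₀|² = λ·γ₀⊥ for a constant λ ∈ ℝ. Define γ(s,t) := √(1 + 2λt)·γ₀(s) for all t with 1 + 2λt > 0. Then γ solves the equivariant Lagrangian mean curvature flow equation up to tangential motion: the projection of ∂γ/∂t orthogonal to the tangent direction γ_s equals κ − γ⊥/|γ|², where κ and γ⊥ are computed from γ(·,t). (For λ > 0 this gives Anciaux's self-expanders, for λ < 0 self-shrinkers.) -/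
/-!
Both sides of the flow equation scale under the dilation `γ ↦ c • γ` by a real `c ≠ 0`: the
normal speed of `t ↦ √(1 + 2λt) γ₀` is `(λ / c) γ₀⊥` with `c = √(1 + 2λt)`, while
`κ − γ⊥/|γ|²` is homogeneous of degree `-1`, hence equals `c⁻¹ (κ₀ − γ₀⊥/|γ₀|²) = c⁻¹ λ γ₀⊥`
by the soliton equation.
-/

/-- The curvature vector of a regular curve `γ : ℝ → ℂ`:
`κ = |γ_s|⁻²·(γ_ss − |γ_s|⁻²·⟨γ_ss,γ_s⟩·γ_s)` with `⟨a,b⟩ = Re(a·conj b)`. -/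
noncomputable def curvVec (γ : ℝ → ℂ) (s : ℝ) : ℂ :=
  (Complex.normSq (deriv γ s))⁻¹ •
    (deriv (deriv γ) s -
      (Complex.normSq (deriv γ s))⁻¹ •
        ((deriv (deriv γ) s * star (deriv γ s)).re : ℝ) • deriv γ s)

/-- The normal projection of the position vector of a regular curve `γ : ℝ → ℂ`:
`γ⊥ = γ − |γ_s|⁻²·⟨γ,γ_s⟩·γ_s` with `⟨a,b⟩ = Re(a·conj b)`. -/
noncomputable def perpVec (γ : ℝ → ℂ) (s : ℝ) : ℂ :=
  γ s - (Complex.normSq (deriv γ s))⁻¹ • ((γ s * star (deriv γ s)).re : ℝ) • deriv γ s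

open Complex

noncomputable section

-- Junk value: `projOrth v 0 = v`, since `(0 : ℝ)⁻¹ = 0`.
def projOrth (v w : ℂ) : ℂ :=
  v - (normSq w)⁻¹ • ((v * star w).re : ℝ) • w

theorem projOrth_ofReal_mul (a : ℝ) (v w : ℂ) :
    projOrth (a * v) w = a * projOrth v w := by
  simp only [projOrth, real_smul, mul_assoc, re_ofReal_mul, ofReal_mul]
  ring

theorem projOrth_mul_ofReal (v w : ℂ) {c : ℝ} (hc : c ≠ 0) :
    projOrth v (c * w) = projOrth v w := by
  have hstar : v * star ((c : ℂ) * w) = c * (v * star w) := by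
    simp only [star_mul', star_def, conj_ofReal]
    ring
  simp only [projOrth, hstar, re_ofReal_mul, normSq_mul, normSq_ofReal, real_smul, ofReal_mul,
    ofReal_inv]
  have hc' : (c : ℂ) ≠ 0 := ofReal_ne_zero.mpr hc
  field_simp

theorem perpVec_eq_projOrth (γ : ℝ → ℂ) (s : ℝ) :
    perpVec γ s = projOrth (γ s) (deriv γ s) := rfl

theorem curvVec_eq_projOrth (γ : ℝ → ℂ) (s : ℝ) :
    curvVec γ s = (normSq (deriv γ s))⁻¹ • projOrth (deriv (deriv γ) s) (deriv γ s) := rfl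

theorem perpVec_const_mul {c : ℝ} (hc : c ≠ 0) (γ : ℝ → ℂ) (s : ℝ) :
    perpVec (fun σ => (c : ℂ) * γ σ) s = c * perpVec γ s := by
  rw [perpVec_eq_projOrth, deriv_const_mul_field', projOrth_mul_ofReal _ _ hc,
    projOrth_ofReal_mul, perpVec_eq_projOrth]

theorem curvVec_const_mul {c : ℝ} (hc : c ≠ 0) (γ : ℝ → ℂ) (s : ℝ) :
    curvVec (fun σ => (c : ℂ) * γ σ) s = (c : ℂ)⁻¹ * curvVec γ s := by
  rw [curvVec_eq_projOrth, deriv_const_mul_field', deriv_const_mul_field',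
    projOrth_mul_ofReal _ _ hc, projOrth_ofReal_mul, curvVec_eq_projOrth, normSq_mul,
    normSq_ofReal, real_smul, real_smul]
  push_cast
  field_simp

def lmcfVelocity (γ : ℝ → ℂ) (s : ℝ) : ℂ :=
  curvVec γ s - perpVec γ s / (normSq (γ s) : ℂ)

theorem lmcfVelocity_const_mul {c : ℝ} (hc : c ≠ 0) (γ : ℝ → ℂ) (s : ℝ) :
    lmcfVelocity (fun σ => (c : ℂ) * γ σ) s = (c : ℂ)⁻¹ * lmcfVelocity γ s := by
  simp only [lmcfVelocity, curvVec_const_mul hc, perpVec_const_mul hc, normSq_mul, normSq_ofReal,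
    ofReal_mul]
  have hc' : (c : ℂ) ≠ 0 := ofReal_ne_zero.mpr hc
  field_simp

theorem hasDerivAt_sqrt_one_add_two_mul {lam t : ℝ} (ht : 0 < 1 + 2 * lam * t) :
    HasDerivAt (fun τ => √(1 + 2 * lam * τ)) (lam / √(1 + 2 * lam * t)) t := by
  have h := (((hasDerivAt_id' t).const_mul (2 * lam)).const_add 1).sqrt ht.ne'
  convert h using 1
  field_simp

end

theorem soliton_dilation_solves_LMCF_up_to_tangential_general (I : Set ℝ)
    (γ₀ : ℝ → ℂ) (lam : ℝ)
    (hsol : ∀ s ∈ I,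
      curvVec γ₀ s - perpVec γ₀ s / (Complex.normSq (γ₀ s) : ℂ)
        = (lam : ℂ) * perpVec γ₀ s) :
    ∀ s ∈ I, ∀ t : ℝ, 0 < 1 + 2 * lam * t →
      deriv (fun τ : ℝ => (Real.sqrt (1 + 2 * lam * τ) : ℂ) * γ₀ s) t
        - (Complex.normSq
              (deriv (fun σ : ℝ => (Real.sqrt (1 + 2 * lam * t) : ℂ) * γ₀ σ) s))⁻¹ •
            ((deriv (fun τ : ℝ => (Real.sqrt (1 + 2 * lam * τ) : ℂ) * γ₀ s) t *
                star (deriv (fun σ : ℝ => (Real.sqrt (1 + 2 * lam * t) : ℂ) * γ₀ σ) s)).re : ℝ) •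
            deriv (fun σ : ℝ => (Real.sqrt (1 + 2 * lam * t) : ℂ) * γ₀ σ) s
      = curvVec (fun σ : ℝ => (Real.sqrt (1 + 2 * lam * t) : ℂ) * γ₀ σ) s
        - perpVec (fun σ : ℝ => (Real.sqrt (1 + 2 * lam * t) : ℂ) * γ₀ σ) s /
            (Complex.normSq ((Real.sqrt (1 + 2 * lam * t) : ℂ) * γ₀ s) : ℂ) := by
  intro s hs t ht
  set c := √(1 + 2 * lam * t)
  have hc : c ≠ 0 := (Real.sqrt_pos.mpr ht).ne'
  have htime : deriv (fun τ : ℝ => (√(1 + 2 * lam * τ) : ℂ) * γ₀ s) t =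
      ((lam / c : ℝ) : ℂ) * γ₀ s :=
    ((hasDerivAt_sqrt_one_add_two_mul ht).ofReal_comp.mul_const (γ₀ s)).deriv
  change projOrth _ (deriv (fun σ => (c : ℂ) * γ₀ σ) s) = lmcfVelocity (fun σ => (c : ℂ) * γ₀ σ) s
  rw [htime, deriv_const_mul_field, projOrth_mul_ofReal _ _ hc, projOrth_ofReal_mul,
    ← perpVec_eq_projOrth, lmcfVelocity_const_mul hc, lmcfVelocity, hsol s hs]
  push_cast
  ring

/-- If a regular twice-differentiable curve `γ₀ : I → ℂ∖{0}` satisfies the soliton equation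
`κ₀ − γ₀⊥/|γ₀|² = λ·γ₀⊥`, then `γ(s,t) = √(1+2λt)·γ₀(s)` solves the equivariant Lagrangian
mean curvature flow up to tangential motion: the projection of `∂γ/∂t` orthogonal to the
tangent direction `γ_s` equals `κ − γ⊥/|γ|²`.  For `λ > 0` these are Anciaux's
self-expanders, for `λ < 0` self-shrinkers. -/
theorem soliton_dilation_solves_LMCF_up_to_tangential (I : Set ℝ) (hI : IsOpen I)
    (γ₀ : ℝ → ℂ) (lam : ℝ)
    (hsm : ContDiffOn ℝ 2 γ₀ I)
    (hreg : ∀ s ∈ I, deriv γ₀ s ≠ 0)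
    (hne : ∀ s ∈ I, γ₀ s ≠ 0)
    (hsol : ∀ s ∈ I,
      curvVec γ₀ s - perpVec γ₀ s / (Complex.normSq (γ₀ s) : ℂ)
        = (lam : ℂ) * perpVec γ₀ s) :
    ∀ s ∈ I, ∀ t : ℝ, 0 < 1 + 2 * lam * t →
      deriv (fun τ : ℝ => (Real.sqrt (1 + 2 * lam * τ) : ℂ) * γ₀ s) t
        - (Complex.normSq
              (deriv (fun σ : ℝ => (Real.sqrt (1 + 2 * lam * t) : ℂ) * γ₀ σ) s))⁻¹ •
            ((deriv (fun τ : ℝ => (Real.sqrt (1 + 2 * lam * τ) : ℂ) * γ₀ s) t *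
                star (deriv (fun σ : ℝ => (Real.sqrt (1 + 2 * lam * t) : ℂ) * γ₀ σ) s)).re : ℝ) •
            deriv (fun σ : ℝ => (Real.sqrt (1 + 2 * lam * t) : ℂ) * γ₀ σ) s
      = curvVec (fun σ : ℝ => (Real.sqrt (1 + 2 * lam * t) : ℂ) * γ₀ σ) s
        - perpVec (fun σ : ℝ => (Real.sqrt (1 + 2 * lam * t) : ℂ) * γ₀ σ) s /
            (Complex.normSq ((Real.sqrt (1 + 2 * lam * t) : ℂ) * γ₀ s) : ℂ) :=
  soliton_dilation_solves_LMCF_up_to_tangential_general I γ₀ lam hsol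
end

section
/- Let c ∈ ℝ and let γ : I → ℂ∖{0} be a twice-differentiable unit-speed curve with Re(γ(s)²) = c for all s ∈ I. Then γ''(s) = (γ(s) − ⟨γ(s),γ'(s)⟩·γ'(s))/|γ(s)|² for all s, i.e., κ = γ⊥/|γ|². Hence the equivariant Lagrangian defined by γ is minimal (its mean curvature vanishes), and it is a stationary solution of equivariant Lagrangian mean curvature flow; for c > 0 these are the Lawlor necks. -/
/-!
Differentiating `Re (γ²) = c` gives `Re (γ γ') = 0`, differentiating that once more gives
`Re (γ'² + γ γ'') = 0`, and differentiating `|γ'|² = 1` shows `γ'' ⊥ γ'`. For the unit vector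
`v = γ' s` the first and last conditions say `γ = a i v̄` and `γ'' = k i v` with `a, k` real, and
the second becomes `a k = Re (v²)`, which is exactly the claimed formula for `γ''`.
-/

open Complex ComplexConjugate

theorem HasDerivAt.eq_zero_of_eqOn_const {𝕜 F : Type*} [NontriviallyNormedField 𝕜]
    [NormedAddCommGroup F] [NormedSpace 𝕜 F] {I : Set 𝕜} (hI : IsOpen I) {f : 𝕜 → F}
    {f' c : F} {s : 𝕜} (hs : s ∈ I) (hf : ∀ t ∈ I, f t = c) (hd : HasDerivAt f f' s) :
    f' = 0 :=
  hd.unique <| (hasDerivAt_const s c).congr_of_eventuallyEq <| by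
    filter_upwards [hI.mem_nhds hs] with t ht using hf t ht

theorem HasDerivAt.re_eq_zero_of_re_eqOn_const {I : Set ℝ} (hI : IsOpen I) {f : ℝ → ℂ}
    {f' : ℂ} {c s : ℝ} (hs : s ∈ I) (hf : ∀ t ∈ I, (f t).re = c) (hd : HasDerivAt f f' s) :
    f'.re = 0 :=
  (reCLM.hasFDerivAt.comp_hasDerivAt s hd).eq_zero_of_eqOn_const hI hs hf

theorem Complex.eq_im_mul_I_mul_conj_of_re_mul_eq_zero {g v : ℂ} (hv : ‖v‖ = 1)
    (h : (g * v).re = 0) : g = (g * v).im * I * conj v := by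
  have hgv : g * v = (g * v).im * I := Complex.ext (by simp [h]) (by simp)
  have hvv : v * conj v = 1 := by simp [mul_conj', hv]
  linear_combination conj v * hgv - g * hvv

theorem curvature_eq_normal_div_normSq {g v w : ℂ} (hv : ‖v‖ = 1) (hg : g ≠ 0)
    (hgv : (g * v).re = 0) (hvw : (w * conj v).re = 0) (hacc : (v ^ 2 + g * w).re = 0) :
    w = (g - ((g * star v).re : ℝ) • v) / (normSq g : ℂ) := by
  have hvv : v * conj v = 1 := by simp [mul_conj', hv]
  obtain ⟨a, rfl⟩ : ∃ a : ℝ, g = a * I * conj v :=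
    ⟨_, eq_im_mul_I_mul_conj_of_re_mul_eq_zero hv hgv⟩
  obtain ⟨k, rfl⟩ : ∃ k : ℝ, w = k * I * v := by
    have hw := eq_im_mul_I_mul_conj_of_re_mul_eq_zero (g := w) (v := conj v)
      (by simpa using hv) hvw
    exact ⟨_, by rwa [conj_conj] at hw⟩
  have hak : (a * k : ℂ) = (v ^ 2 + conj v ^ 2) / 2 := by
    have hsum : v ^ 2 + a * I * conj v * (k * I * v) = v ^ 2 - (a * k : ℝ) := by
      push_cast
      linear_combination (-a * k) * hvv + a * k * v * conj v * I_sq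
    rw [hsum, sub_re, ofReal_re, sub_eq_zero] at hacc
    rw [← ofReal_mul, ← hacc, re_eq_add_conj, map_pow]
  have hnormSq : (normSq (a * I * conj v) : ℂ) = a ^ 2 := by
    simp [normSq_eq_norm_sq, hv]
  have htangential :
      (((a * I * conj v * star v).re : ℝ) : ℂ) = a * I * (conj v ^ 2 - v ^ 2) / 2 := by
    rw [re_eq_add_conj]
    simp only [star_def, map_mul, conj_ofReal, conj_I, conj_conj]
    ring
  rw [eq_div_iff (by simpa using hg), hnormSq, real_smul, htangential]
  linear_combination (a * I * v) * hak + a * I * conj v * hvv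

/-- Let `γ : I → ℂ∖{0}` be a twice-differentiable unit-speed curve with `Re(γ²) = c`
constant.  Then `γ'' = (γ − ⟨γ,γ'⟩·γ')/|γ|²`, i.e. `κ = γ⊥/|γ|²` where `κ = γ''` and
`γ⊥ = γ − ⟨γ,γ'⟩·γ'` with `⟨a,b⟩ = Re(a·conj b)`.  Hence the equivariant Lagrangian defined
by `γ` is minimal and a stationary solution of equivariant Lagrangian mean curvature flow;
for `c > 0` these are the Lawlor necks. -/
theorem lawlor_neck_curve_is_minimal (I : Set ℝ) (hI : IsOpen I) (c : ℝ)
    (γ γ' γ'' : ℝ → ℂ)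
    (hd1 : ∀ s ∈ I, HasDerivAt γ (γ' s) s)
    (hd2 : ∀ s ∈ I, HasDerivAt γ' (γ'' s) s)
    (hunit : ∀ s ∈ I, ‖γ' s‖ = 1)
    (hne : ∀ s ∈ I, γ s ≠ 0)
    (hc : ∀ s ∈ I, ((γ s) ^ 2).re = c) :
    ∀ s ∈ I,
      γ'' s = (γ s - ((γ s * star (γ' s)).re : ℝ) • γ' s) / (Complex.normSq (γ s) : ℂ) := by
  have hγγ' : ∀ t ∈ I, (γ t * γ' t).re = 0 := by
    intro t ht
    have h := ((hd1 t ht).mul (hd1 t ht)).re_eq_zero_of_re_eqOn_const hI ht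
      (fun u hu => by rw [← sq]; exact hc u hu)
    rw [mul_comm (γ' t), ← two_mul] at h
    simpa using h
  intro s hs
  have hacc : (γ' s ^ 2 + γ s * γ'' s).re = 0 := by
    simpa [sq] using ((hd1 s hs).mul (hd2 s hs)).re_eq_zero_of_re_eqOn_const hI hs hγγ'
  have hnormal : (γ'' s * conj (γ' s)).re = 0 := by
    have h := (hd2 s hs).norm_sq.eq_zero_of_eqOn_const hI hs (c := 1)
      (fun u hu => by simp [hunit u hu])
    rw [Complex.inner] at h
    linarith
  exact curvature_eq_normal_div_normSq (hunit s hs) (hne s hs) (hγγ' s hs) hnormal hacc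
end

section
/- Let c(t) = exp(cos t) + i·sin t·exp(−cos t) for t ∈ ℝ (a curve defining an equivariant Chekanov torus in ℂ²). Then: (i) c is injective on [0, 2π), so it parametrizes an embedded closed curve; and (ii) Re c(t) ≥ exp(−1) > 0 for all t, so the curve lies in the open right half-plane and in particular does not enclose the origin. -/
/-- The curve `c(t) = exp(cos t) + i·sin t·exp(−cos t)` defining an equivariant Chekanov
torus in `ℂ²`. -/
noncomputable def chekanovCurve (t : ℝ) : ℂ :=
  (Real.exp (Real.cos t) : ℝ) + Complex.I * ((Real.sin t * Real.exp (-Real.cos t)) : ℝ)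

lemma chekanovCurve_re_im (t : ℝ) : (chekanovCurve t).re = Real.exp (Real.cos t) ∧
    (chekanovCurve t).im = Real.sin t * Real.exp (-Real.cos t) := by
  constructor <;>
  simp [chekanovCurve, Complex.add_re, Complex.mul_re, Complex.I_re, Complex.I_im,
    Complex.ofReal_re, Complex.ofReal_im, Complex.add_im, Complex.mul_im,
    -Complex.ofReal_exp, -Complex.ofReal_cos, -Complex.ofReal_sin]

lemma chekanov_cossin_inj {s t : ℝ} (hs : s ∈ Set.Ico 0 (2*Real.pi))
    (ht : t ∈ Set.Ico 0 (2*Real.pi))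
    (hc : Real.cos s = Real.cos t) (hsin : Real.sin s = Real.sin t) : s = t := by
  have he : Complex.exp (s * Complex.I) = Complex.exp (t * Complex.I) := by
    rw [Complex.exp_mul_I, Complex.exp_mul_I]
    rw [← Complex.ofReal_cos, ← Complex.ofReal_sin, ← Complex.ofReal_cos, ← Complex.ofReal_sin,
      hc, hsin]
  rw [Complex.exp_eq_exp_iff_exists_int] at he
  obtain ⟨n, hn⟩ := he
  have him := congrArg Complex.im hn
  simp [Complex.add_im, Complex.mul_im] at him
  have hr : s = t + n * (2 * Real.pi) := by
    simpa using him
  have hpi := Real.pi_pos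
  have hb : (-1:ℝ) < n ∧ (n:ℝ) < 1 := by
    constructor <;> nlinarith [hs.1, hs.2, ht.1, ht.2]
  have hn0 : n = 0 := by
    have h1 : (-1:ℤ) < n := by exact_mod_cast hb.1
    have h2 : n < (1:ℤ) := by exact_mod_cast hb.2
    omega
  rw [hr, hn0]; push_cast; ring

/-- The curve `c(t) = exp(cos t) + i·sin t·exp(−cos t)` defining an equivariant Chekanov
torus: (i) `c` is injective on `[0,2π)`, so it parametrizes an embedded closed curve; and
(ii) `Re c(t) ≥ exp(−1) > 0` for all `t`, so the curve lies in the open right half-plane and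
in particular does not enclose the origin. -/
theorem chekanovCurve_embedded_and_misses_origin :
    Set.InjOn chekanovCurve (Set.Ico 0 (2 * Real.pi)) ∧
    (∀ t : ℝ, Real.exp (-1) ≤ (chekanovCurve t).re) ∧
    0 < Real.exp (-1) := by
  refine ⟨?_, ?_, Real.exp_pos _⟩
  · intro s hs t ht heq
    have hre : Real.exp (Real.cos s) = Real.exp (Real.cos t) := by
      rw [← (chekanovCurve_re_im s).1, ← (chekanovCurve_re_im t).1, heq]
    have hc : Real.cos s = Real.cos t := Real.exp_injective hre
    have him : Real.sin s * Real.exp (-Real.cos s) = Real.sin t * Real.exp (-Real.cos t) := by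
      rw [← (chekanovCurve_re_im s).2, ← (chekanovCurve_re_im t).2, heq]
    rw [hc] at him
    have hsin : Real.sin s = Real.sin t :=
      mul_right_cancel₀ (ne_of_gt (Real.exp_pos _)) him
    exact chekanov_cossin_inj hs ht hc hsin
  · intro t
    rw [(chekanovCurve_re_im t).1]
    exact Real.exp_le_exp.mpr (Real.neg_one_le_cos t)
end
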